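/- arXiv:1909.02795 — 6 statements merged into one kernel-verified Lean document; each statement's English description precedes it below -/
import Mathlib

section
/- Let λ > 0, c ∈ (0,1), and 0 < ψ₀ ≤ 1. If τ̄ < ln(1 + ψ₀³(1−c)/((2 + ψ₀²)λ)), then there exists β > 0 satisfying simultaneously: (i) 2λ − β ψ₀ (1−c) e^{−τ̄} + λ β (1 − e^{−τ̄}) ≤ 0, and (ii) β (1 − e^{−τ̄}) < ψ₀². -/
theorem exists_beta_for_small_delay (lam c ψ₀ τbar : ℝ)
    (hlam : 0 < lam) (hc0 : 0 < c) (hc1 : c < 1) (hψ₀ : 0 < ψ₀) (hψ₀le : ψ₀ ≤ 1)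
    (hτ : τbar < Real.log (1 + ψ₀ ^ 3 * (1 - c) / ((2 + ψ₀ ^ 2) * lam))) :
    ∃ β : ℝ, 0 < β ∧
      2 * lam - β * ψ₀ * (1 - c) * Real.exp (-τbar) + lam * β * (1 - Real.exp (-τbar)) ≤ 0 ∧
      β * (1 - Real.exp (-τbar)) < ψ₀ ^ 2 := by
  have hc : 0 < 1 - c := by linarith
  set E := Real.exp (-τbar) with hEdef
  have hEpos : 0 < E := Real.exp_pos _
  have hnum : 0 < ψ₀ ^ 3 * (1 - c) := by positivity
  have hA : 0 < (2 + ψ₀ ^ 2) * lam := by positivity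
  have hK : 0 < ψ₀ ^ 3 * (1 - c) / ((2 + ψ₀ ^ 2) * lam) := div_pos hnum hA
  have h1 : Real.exp τbar < 1 + ψ₀ ^ 3 * (1 - c) / ((2 + ψ₀ ^ 2) * lam) := by
    calc Real.exp τbar < Real.exp (Real.log (1 + ψ₀ ^ 3 * (1 - c) / ((2 + ψ₀ ^ 2) * lam))) :=
          Real.exp_lt_exp.mpr hτ
      _ = _ := Real.exp_log (by linarith)
  have hEinv : E * Real.exp τbar = 1 := by
    rw [hEdef, ← Real.exp_add]; simp
  have hKA : ψ₀ ^ 3 * (1 - c) / ((2 + ψ₀ ^ 2) * lam) * ((2 + ψ₀ ^ 2) * lam)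
      = ψ₀ ^ 3 * (1 - c) := div_mul_cancel₀ _ (ne_of_gt hA)
  -- key: E * (A + num) > A
  have hkey : (2 + ψ₀ ^ 2) * lam < E * ((2 + ψ₀ ^ 2) * lam + ψ₀ ^ 3 * (1 - c)) := by
    have h2 : E * Real.exp τbar < E * (1 + ψ₀ ^ 3 * (1 - c) / ((2 + ψ₀ ^ 2) * lam)) :=
      mul_lt_mul_of_pos_left h1 hEpos
    rw [hEinv] at h2
    nlinarith [mul_lt_mul_of_pos_right h2 hA]
  have hD : 0 < ψ₀ * (1 - c) * E - lam * (1 - E) := by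
    nlinarith [mul_pos (mul_pos hEpos hc) (mul_pos hψ₀ hlam), sq_nonneg ψ₀,
      mul_pos hEpos hc]
  refine ⟨2 * lam / (ψ₀ * (1 - c) * E - lam * (1 - E)), div_pos (by linarith) hD, ?_, ?_⟩
  · have hβD : 2 * lam / (ψ₀ * (1 - c) * E - lam * (1 - E)) *
        (ψ₀ * (1 - c) * E - lam * (1 - E)) = 2 * lam := div_mul_cancel₀ _ (ne_of_gt hD)
    nlinarith [hβD]
  · rw [div_mul_eq_mul_div, div_lt_iff₀ hD]
    nlinarith [hkey]
end

section
/- Let ψ : [0,∞) → (0,∞) be Lipschitz with constant L and ψ(0) = 1, let μ be a probability measure on ℝ^d supported in the closed ball B(0,R), and define F(x) = ∫ ψ(|x−y|)(y−x) dμ(y). Then for all x, x̃ ∈ B(0,R): |F(x) − F(x̃)| ≤ (1 + 2RL)|x − x̃|, and |F(x)| ≤ 2R. -/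
/-!
Write the difference of the integrands at `x` and `z` as
`ψ ‖x - y‖ • (z - x) + (ψ ‖x - y‖ - ψ ‖z - y‖) • (y - z)`. Since `0 < ψ ≤ 1`, the first term has
norm at most `‖x - z‖`; by the Lipschitz bound on `ψ` and `‖y - z‖ ≤ 2R` the second has norm at
most `2RL‖x - z‖`. The integrands are continuous and `μ` lives on a compact ball, so they are
integrable, and integrating these pointwise bounds against the probability measure `μ` gives the
Lipschitz estimate; the bound `‖F x‖ ≤ 2R` comes the same way from `‖y - x‖ ≤ 2R`.
-/

open MeasureTheory Set Metric

section Kernel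

variable {E : Type*} [NormedAddCommGroup E]

theorem LipschitzOnWith.abs_sub_comp_norm_sub_le {ψ : ℝ → ℝ} {L : NNReal}
    (hψ : LipschitzOnWith L ψ (Ici 0)) (x z y : E) :
    |ψ ‖x - y‖ - ψ ‖z - y‖| ≤ L * ‖x - z‖ :=
  calc |ψ ‖x - y‖ - ψ ‖z - y‖|
      ≤ L * |‖x - y‖ - ‖z - y‖| :=
        hψ.dist_le_mul _ (norm_nonneg (x - y)) _ (norm_nonneg (z - y))
    _ ≤ L * ‖x - z‖ := by
        gcongr
        simpa using abs_norm_sub_norm_le (x - y) (z - y)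

theorem norm_sub_le_of_norm_le {x y : E} {R : ℝ} (hx : ‖x‖ ≤ R) (hy : ‖y‖ ≤ R) :
    ‖y - x‖ ≤ 2 * R := by
  linarith [norm_sub_le y x]

variable [NormedSpace ℝ E]

theorem norm_smul_sub_smul_le (a b : ℝ) (u v : E) :
    ‖a • u - b • v‖ ≤ |a| * ‖u - v‖ + |a - b| * ‖v‖ := by
  have hsplit : a • u - b • v = a • (u - v) + (a - b) • v := by module
  rw [hsplit]
  refine (norm_add_le _ _).trans_eq ?_
  rw [norm_smul, norm_smul, Real.norm_eq_abs, Real.norm_eq_abs]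

variable {ψ : ℝ → ℝ} {R : ℝ} {x y z : E}

theorem norm_smul_sub_smul_comp_norm_sub_le {L : NNReal} (hψ : ∀ r, 0 ≤ r → |ψ r| ≤ 1)
    (hL : LipschitzOnWith L ψ (Ici 0)) (hy : ‖y‖ ≤ R) (hz : ‖z‖ ≤ R) :
    ‖ψ ‖x - y‖ • (y - x) - ψ ‖z - y‖ • (y - z)‖ ≤ (1 + 2 * R * L) * ‖x - z‖ :=
  calc ‖ψ ‖x - y‖ • (y - x) - ψ ‖z - y‖ • (y - z)‖
      ≤ |ψ ‖x - y‖| * ‖(y - x) - (y - z)‖ + |ψ ‖x - y‖ - ψ ‖z - y‖| * ‖y - z‖ :=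
        norm_smul_sub_smul_le _ _ _ _
    _ ≤ 1 * ‖x - z‖ + L * ‖x - z‖ * (2 * R) := by
        gcongr
        · exact hψ _ (norm_nonneg _)
        · rw [sub_sub_sub_cancel_left, norm_sub_rev]
        · exact hL.abs_sub_comp_norm_sub_le x z y
        · exact norm_sub_le_of_norm_le hz hy
    _ = (1 + 2 * R * L) * ‖x - z‖ := by ring

theorem norm_smul_comp_norm_sub_le (hψ : ∀ r, 0 ≤ r → |ψ r| ≤ 1) (hx : ‖x‖ ≤ R)
    (hy : ‖y‖ ≤ R) : ‖ψ ‖x - y‖ • (y - x)‖ ≤ 2 * R :=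
  calc ‖ψ ‖x - y‖ • (y - x)‖ = |ψ ‖x - y‖| * ‖y - x‖ := by
        rw [norm_smul, Real.norm_eq_abs]
    _ ≤ 1 * (2 * R) := by
        gcongr
        · exact hψ _ (norm_nonneg _)
        · exact norm_sub_le_of_norm_le hx hy
    _ = 2 * R := one_mul _

theorem ContinuousOn.continuous_smul_comp_norm_sub (hψ : ContinuousOn ψ (Ici 0)) (x : E) :
    Continuous fun y : E ↦ ψ ‖x - y‖ • (y - x) :=
  (hψ.comp_continuous (continuous_const.sub continuous_id).norm fun y ↦ norm_nonneg (x - y)).smul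
    (continuous_id.sub continuous_const)

end Kernel

section Integral

variable {X G : Type*} [MeasurableSpace X] {μ : Measure X}
  [NormedAddCommGroup G]

theorem ContinuousOn.integrable_of_ae_mem [TopologicalSpace X] [OpensMeasurableSpace X]
    [T2Space X] [IsFiniteMeasureOnCompacts μ] {f : X → G} {K : Set X} (hK : IsCompact K)
    (hf : ContinuousOn f K) (hμ : ∀ᵐ x ∂μ, x ∈ K) : Integrable f μ := by
  have hfK : IntegrableOn f K μ := hf.integrableOn_compact hK
  rwa [IntegrableOn, Measure.restrict_eq_self_of_ae_mem hμ] at hfK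

theorem norm_integral_sub_integral_le [NormedSpace ℝ G] [IsProbabilityMeasure μ]
    {f g : X → G} {C : ℝ} (hf : Integrable f μ) (hg : Integrable g μ)
    (h : ∀ᵐ x ∂μ, ‖f x - g x‖ ≤ C) :
    ‖∫ x, f x ∂μ - ∫ x, g x ∂μ‖ ≤ C := by
  simpa [← integral_sub hf hg] using norm_integral_le_of_norm_le_const h

end Integral

open MeasureTheory in
theorem symmetric_velocity_field_lipschitz_bounded_general {d : ℕ}
    (ψ : ℝ → ℝ) (L : NNReal) (hL : LipschitzOnWith L ψ (Set.Ici 0))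
    (hψpos : ∀ r, 0 ≤ r → 0 < ψ r)
    (hψmono : ∀ r s, 0 ≤ r → r ≤ s → ψ s ≤ ψ r) (hψ0 : ψ 0 = 1)
    (R : ℝ)
    (μ : Measure (EuclideanSpace ℝ (Fin d))) [IsProbabilityMeasure μ]
    (hsupp : μ (Metric.closedBall (0 : EuclideanSpace ℝ (Fin d)) R)ᶜ = 0)
    (F : EuclideanSpace ℝ (Fin d) → EuclideanSpace ℝ (Fin d))
    (hF : ∀ x, F x = ∫ y, ψ ‖x - y‖ • (y - x) ∂μ) :
    ∀ x ∈ Metric.closedBall (0 : EuclideanSpace ℝ (Fin d)) R,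
    ∀ z ∈ Metric.closedBall (0 : EuclideanSpace ℝ (Fin d)) R,
      ‖F x - F z‖ ≤ (1 + 2 * R * L) * ‖x - z‖ ∧ ‖F x‖ ≤ 2 * R := by
  intro x hx z hz
  rw [mem_closedBall_zero_iff] at hx hz
  have hψ : ∀ r, 0 ≤ r → |ψ r| ≤ 1 := fun r hr ↦
    abs_le.2 ⟨by linarith [hψpos r hr], hψ0 ▸ hψmono 0 r le_rfl hr⟩
  have hball : ∀ᵐ y ∂μ, y ∈ closedBall 0 R := ae_iff.2 hsupp
  have hint (w : EuclideanSpace ℝ (Fin d)) : Integrable (fun y ↦ ψ ‖w - y‖ • (y - w)) μ :=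
    (hL.continuousOn.continuous_smul_comp_norm_sub w).continuousOn.integrable_of_ae_mem
      (isCompact_closedBall 0 R) hball
  refine ⟨?_, ?_⟩
  · rw [hF, hF]
    refine norm_integral_sub_integral_le (hint x) (hint z) (hball.mono fun y hy ↦ ?_)
    exact norm_smul_sub_smul_comp_norm_sub_le hψ hL (mem_closedBall_zero_iff.1 hy) hz
  · rw [hF]
    simpa using norm_integral_le_of_norm_le_const (hball.mono fun y hy ↦
      norm_smul_comp_norm_sub_le hψ hx (mem_closedBall_zero_iff.1 hy))

open MeasureTheory in
theorem symmetric_velocity_field_lipschitz_bounded {d : ℕ}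
    (ψ : ℝ → ℝ) (L : NNReal) (hL : LipschitzOnWith L ψ (Set.Ici 0))
    (hψpos : ∀ r, 0 ≤ r → 0 < ψ r)
    (hψmono : ∀ r s, 0 ≤ r → r ≤ s → ψ s ≤ ψ r) (hψ0 : ψ 0 = 1)
    (R : ℝ) (hR : 0 ≤ R)
    (μ : Measure (EuclideanSpace ℝ (Fin d))) [IsProbabilityMeasure μ]
    (hsupp : μ (Metric.closedBall (0 : EuclideanSpace ℝ (Fin d)) R)ᶜ = 0)
    (F : EuclideanSpace ℝ (Fin d) → EuclideanSpace ℝ (Fin d))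
    (hF : ∀ x, F x = ∫ y, ψ ‖x - y‖ • (y - x) ∂μ) :
    ∀ x ∈ Metric.closedBall (0 : EuclideanSpace ℝ (Fin d)) R,
    ∀ z ∈ Metric.closedBall (0 : EuclideanSpace ℝ (Fin d)) R,
      ‖F x - F z‖ ≤ (1 + 2 * R * L) * ‖x - z‖ ∧ ‖F x‖ ≤ 2 * R :=
  symmetric_velocity_field_lipschitz_bounded_general ψ L hL hψpos hψmono hψ0 R μ hsupp F hF
end

section
/- Let ψ : [0,∞) → (0,∞) be Lipschitz with constant L, ψ(0) = 1, and let ψ* = inf_{r ∈ [0,2R]} ψ(r) > 0. Let μ be a probability measure on ℝ^d with supp μ ⊆ B(0,R). Define F(x) = (∫ ψ(|x−y|)(y−x) dμ(y)) / (∫ ψ(|x−y|) dμ(y)). Then for all x, x̃ ∈ B(0,R): |F(x) − F(x̃)| ≤ (2RL/(ψ*)² + 1)|x − x̃| and |F(x)| ≤ R(1/ψ* + 1). -/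
open MeasureTheory in
theorem normalized_velocity_field_lipschitz_bounded {d : ℕ}
    (ψ : ℝ → ℝ) (L : NNReal) (hL : LipschitzOnWith L ψ (Set.Ici 0))
    (hψpos : ∀ r, 0 ≤ r → 0 < ψ r) (hψ0 : ψ 0 = 1)
    (R : ℝ) (hR : 0 ≤ R) (ψstar : ℝ) (hψstar : 0 < ψstar)
    (hψstar_inf : IsGLB (ψ '' Set.Icc 0 (2 * R)) ψstar)
    (μ : Measure (EuclideanSpace ℝ (Fin d))) [IsProbabilityMeasure μ]
    (hsupp : μ (Metric.closedBall (0 : EuclideanSpace ℝ (Fin d)) R)ᶜ = 0)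
    (F : EuclideanSpace ℝ (Fin d) → EuclideanSpace ℝ (Fin d))
    (hF : ∀ x, F x = (∫ y, ψ ‖x - y‖ ∂μ)⁻¹ • ∫ y, ψ ‖x - y‖ • (y - x) ∂μ) :
    ∀ x ∈ Metric.closedBall (0 : EuclideanSpace ℝ (Fin d)) R,
    ∀ z ∈ Metric.closedBall (0 : EuclideanSpace ℝ (Fin d)) R,
      ‖F x - F z‖ ≤ (2 * R * L / ψstar ^ 2 + 1) * ‖x - z‖ ∧
      ‖F x‖ ≤ R * (1 / ψstar + 1) := by
  intro x hx z hz
  have hL0 : (0:ℝ) ≤ L := L.2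
  -- ψstar ≤ 1
  have hψstar1 : ψstar ≤ 1 := by
    have h0 : ψ 0 ∈ ψ '' Set.Icc 0 (2 * R) :=
      ⟨0, ⟨le_refl 0, by positivity⟩, rfl⟩
    have := hψstar_inf.1 h0
    simpa [hψ0] using this
  -- upper bound for ψ
  have hψub : ∀ r : ℝ, 0 ≤ r → ψ r ≤ 1 + L * r := by
    intro r hr
    have h := hL.dist_le_mul r (Set.mem_Ici.mpr hr) 0 (Set.mem_Ici.mpr le_rfl)
    rw [Real.dist_eq, Real.dist_eq, sub_zero, abs_of_nonneg hr] at h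
    have h1 : ψ r - ψ 0 ≤ L * r := (le_abs_self _).trans h
    rw [hψ0] at h1; linarith
  -- a.e. bound on ‖y‖
  have haeR : ∀ᵐ y ∂μ, ‖y‖ ≤ R := by
    have h1 : ∀ᵐ y ∂μ, y ∈ Metric.closedBall (0 : EuclideanSpace ℝ (Fin d)) R := by
      rw [MeasureTheory.ae_iff]
      exact hsupp
    filter_upwards [h1] with y hy
    simpa [Metric.mem_closedBall, dist_zero_right] using hy
  have hnorm_ball : ∀ w : EuclideanSpace ℝ (Fin d),
      w ∈ Metric.closedBall (0 : EuclideanSpace ℝ (Fin d)) R → ‖w‖ ≤ R := by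
    intro w hw
    simpa [Metric.mem_closedBall, dist_zero_right] using hw
  have hae2 : ∀ w : EuclideanSpace ℝ (Fin d),
      w ∈ Metric.closedBall (0 : EuclideanSpace ℝ (Fin d)) R →
      ∀ᵐ y ∂μ, ‖w - y‖ ≤ 2 * R := by
    intro w hw
    filter_upwards [haeR] with y hy
    calc ‖w - y‖ ≤ ‖w‖ + ‖y‖ := norm_sub_le _ _
      _ ≤ R + R := add_le_add (hnorm_ball w hw) hy
      _ = 2 * R := by ring
  -- pointwise Lipschitz bound
  have hptLip : ∀ w v y : EuclideanSpace ℝ (Fin d),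
      |ψ ‖w - y‖ - ψ ‖v - y‖| ≤ L * ‖w - v‖ := by
    intro w v y
    have h1 := hL.dist_le_mul ‖w - y‖ (Set.mem_Ici.mpr (norm_nonneg _))
      ‖v - y‖ (Set.mem_Ici.mpr (norm_nonneg _))
    rw [Real.dist_eq, Real.dist_eq] at h1
    have h2 : |‖w - y‖ - ‖v - y‖| ≤ ‖w - v‖ := by
      have := abs_norm_sub_norm_le (w - y) (v - y)
      simpa [sub_sub_sub_cancel_right] using this
    calc |ψ ‖w - y‖ - ψ ‖v - y‖| ≤ L * |‖w - y‖ - ‖v - y‖| := h1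
      _ ≤ L * ‖w - v‖ := by gcongr
  have hψnn : ∀ (w y : EuclideanSpace ℝ (Fin d)), 0 ≤ ψ ‖w - y‖ :=
    fun w y => (hψpos _ (norm_nonneg _)).le
  -- continuity
  have hcont : ∀ w : EuclideanSpace ℝ (Fin d), Continuous (fun y => ψ ‖w - y‖) := by
    intro w
    exact hL.continuousOn.comp_continuous
      ((continuous_const.sub continuous_id).norm)
      (fun y => Set.mem_Ici.mpr (norm_nonneg _))
  -- integrability
  have hIntf : ∀ w ∈ Metric.closedBall (0 : EuclideanSpace ℝ (Fin d)) R,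
      Integrable (fun y => ψ ‖w - y‖) μ := by
    intro w hw
    refine Integrable.mono' (integrable_const (1 + L * (2 * R)))
      ((hcont w).aestronglyMeasurable) ?_
    filter_upwards [hae2 w hw] with y hy
    rw [Real.norm_eq_abs, abs_of_nonneg (hψnn w y)]
    calc ψ ‖w - y‖ ≤ 1 + L * ‖w - y‖ := hψub _ (norm_nonneg _)
      _ ≤ 1 + L * (2 * R) := by gcongr
  have hIntm : ∀ w ∈ Metric.closedBall (0 : EuclideanSpace ℝ (Fin d)) R,
      Integrable (fun y => ψ ‖w - y‖ • y) μ := by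
    intro w hw
    refine Integrable.mono' (integrable_const ((1 + L * (2 * R)) * R))
      (((hcont w).smul continuous_id).aestronglyMeasurable) ?_
    filter_upwards [hae2 w hw, haeR] with y hy hyR
    rw [norm_smul, Real.norm_eq_abs, abs_of_nonneg (hψnn w y)]
    have h1 : ψ ‖w - y‖ ≤ 1 + L * (2 * R) := by
      calc ψ ‖w - y‖ ≤ 1 + L * ‖w - y‖ := hψub _ (norm_nonneg _)
        _ ≤ 1 + L * (2 * R) := by gcongr
    exact mul_le_mul h1 hyR (norm_nonneg _) (by positivity)
  -- lower bound on the denominator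
  have ha_low : ∀ w ∈ Metric.closedBall (0 : EuclideanSpace ℝ (Fin d)) R,
      ψstar ≤ ∫ y, ψ ‖w - y‖ ∂μ := by
    intro w hw
    have h1 : (∫ _y, ψstar ∂μ) ≤ ∫ y, ψ ‖w - y‖ ∂μ := by
      refine integral_mono_ae (integrable_const _) (hIntf w hw) ?_
      filter_upwards [hae2 w hw] with y hy
      exact hψstar_inf.1 ⟨‖w - y‖, ⟨norm_nonneg _, hy⟩, rfl⟩
    simpa using h1
  -- bound on the first moment integral
  have hm_bound : ∀ w ∈ Metric.closedBall (0 : EuclideanSpace ℝ (Fin d)) R,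
      ‖∫ y, ψ ‖w - y‖ • y ∂μ‖ ≤ R * ∫ y, ψ ‖w - y‖ ∂μ := by
    intro w hw
    calc ‖∫ y, ψ ‖w - y‖ • y ∂μ‖ ≤ ∫ y, ‖ψ ‖w - y‖ • y‖ ∂μ :=
        norm_integral_le_integral_norm _
      _ ≤ ∫ y, ψ ‖w - y‖ * R ∂μ := by
          refine integral_mono_ae (hIntm w hw).norm ((hIntf w hw).mul_const R) ?_
          filter_upwards [haeR] with y hy
          rw [norm_smul, Real.norm_eq_abs, abs_of_nonneg (hψnn w y)]
          exact mul_le_mul_of_nonneg_left hy (hψnn w y)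
      _ = R * ∫ y, ψ ‖w - y‖ ∂μ := by rw [integral_mul_const]; ring
  -- rewritten form of F
  have hFw : ∀ w ∈ Metric.closedBall (0 : EuclideanSpace ℝ (Fin d)) R,
      F w = (∫ y, ψ ‖w - y‖ ∂μ)⁻¹ • (∫ y, ψ ‖w - y‖ • y ∂μ) - w := by
    intro w hw
    have hane : (∫ y, ψ ‖w - y‖ ∂μ) ≠ 0 :=
      ne_of_gt (lt_of_lt_of_le hψstar (ha_low w hw))
    rw [hF]
    have hsplit : (∫ y, ψ ‖w - y‖ • (y - w) ∂μ)
        = (∫ y, ψ ‖w - y‖ • y ∂μ) - (∫ y, ψ ‖w - y‖ ∂μ) • w := by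
      have heq : (fun y => ψ ‖w - y‖ • (y - w))
          = fun y => ψ ‖w - y‖ • y - ψ ‖w - y‖ • w := by
        funext y; rw [smul_sub]
      rw [heq, integral_sub (hIntm w hw) ((hIntf w hw).smul_const w),
        integral_smul_const]
    rw [hsplit, smul_sub, smul_smul, inv_mul_cancel₀ hane, one_smul]
  set A := ∫ y, ψ ‖x - y‖ ∂μ with hA
  set B := ∫ y, ψ ‖z - y‖ ∂μ with hB
  set Mx := ∫ y, ψ ‖x - y‖ • y ∂μ with hMx
  set Mz := ∫ y, ψ ‖z - y‖ • y ∂μ with hMz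
  have hA0 : 0 < A := lt_of_lt_of_le hψstar (ha_low x hx)
  have hB0 : 0 < B := lt_of_lt_of_le hψstar (ha_low z hz)
  have hAψ : ψstar ≤ A := ha_low x hx
  have hBψ : ψstar ≤ B := ha_low z hz
  set s := ‖x - z‖ with hs
  have hs0 : 0 ≤ s := norm_nonneg _
  constructor
  · -- Lipschitz bound
    have ha_lip : |A - B| ≤ L * s := by
      have hsub : A - B = ∫ y, (ψ ‖x - y‖ - ψ ‖z - y‖) ∂μ :=
        (integral_sub (hIntf x hx) (hIntf z hz)).symm
      rw [hsub]
      calc |∫ y, (ψ ‖x - y‖ - ψ ‖z - y‖) ∂μ|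
          ≤ ∫ y, |ψ ‖x - y‖ - ψ ‖z - y‖| ∂μ := by
            simpa [Real.norm_eq_abs] using
              norm_integral_le_integral_norm (μ := μ) (fun y => ψ ‖x - y‖ - ψ ‖z - y‖)
        _ ≤ ∫ _y, (L : ℝ) * s ∂μ := by
            refine integral_mono_ae (((hIntf x hx).sub (hIntf z hz)).abs)
              (integrable_const _) ?_
            filter_upwards with y
            exact hptLip x z y
        _ = L * s := by simp
    have hm_lip : ‖Mx - Mz‖ ≤ L * s * R := by
      have hsub : Mx - Mz = ∫ y, (ψ ‖x - y‖ - ψ ‖z - y‖) • y ∂μ := by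
        rw [hMx, hMz, ← integral_sub (hIntm x hx) (hIntm z hz)]
        congr 1; funext y; rw [sub_smul]
      rw [hsub]
      calc ‖∫ y, (ψ ‖x - y‖ - ψ ‖z - y‖) • y ∂μ‖
          ≤ ∫ y, ‖(ψ ‖x - y‖ - ψ ‖z - y‖) • y‖ ∂μ := norm_integral_le_integral_norm _
        _ ≤ ∫ _y, (L : ℝ) * s * R ∂μ := by
            refine integral_mono_ae
              (((hIntm x hx).sub (hIntm z hz)).norm.congr ?_) (integrable_const _) ?_
            · filter_upwards with y
              simp [Pi.sub_apply, sub_smul]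
            · filter_upwards [haeR] with y hy
              rw [norm_smul, Real.norm_eq_abs]
              exact mul_le_mul (hptLip x z y) hy (norm_nonneg _) (by positivity)
        _ = L * s * R := by simp
    have hMz_bd : ‖Mz‖ ≤ R * B := hm_bound z hz
    have key : F x - F z = A⁻¹ • (Mx - Mz) + (A⁻¹ - B⁻¹) • Mz + (z - x) := by
      rw [hFw x hx, hFw z hz]
      module
    have t1 : A⁻¹ * ‖Mx - Mz‖ ≤ ψstar⁻¹ * (L * s * R) := by
      refine mul_le_mul ?_ hm_lip (norm_nonneg _) (by positivity)
      exact inv_anti₀ hψstar hAψ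
    have t2 : |A⁻¹ - B⁻¹| * ‖Mz‖ ≤ ψstar⁻¹ * (L * s * R) := by
      have hdiff : A⁻¹ - B⁻¹ = (B - A) / (A * B) := by
        field_simp
      have habs : |A⁻¹ - B⁻¹| = |B - A| / (A * B) := by
        rw [hdiff, abs_div, abs_of_pos (mul_pos hA0 hB0)]
      rw [habs]
      calc |B - A| / (A * B) * ‖Mz‖ ≤ |B - A| / (A * B) * (R * B) := by
            refine mul_le_mul_of_nonneg_left hMz_bd (by positivity)
        _ = |B - A| * R / A := by field_simp
        _ ≤ (L * s) * R / ψstar := by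
            rw [abs_sub_comm] at ha_lip
            gcongr
        _ = ψstar⁻¹ * (L * s * R) := by field_simp
    have hsq : ψstar⁻¹ ≤ (ψstar ^ 2)⁻¹ := by
      refine inv_anti₀ (by positivity) ?_
      nlinarith
    calc ‖F x - F z‖ ≤ ‖A⁻¹ • (Mx - Mz)‖ + ‖(A⁻¹ - B⁻¹) • Mz‖ + ‖z - x‖ := by
          rw [key]
          exact norm_add₃_le
      _ = A⁻¹ * ‖Mx - Mz‖ + |A⁻¹ - B⁻¹| * ‖Mz‖ + s := by
          rw [norm_smul, norm_smul, Real.norm_eq_abs, Real.norm_eq_abs,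
            abs_of_pos (inv_pos.mpr hA0), norm_sub_rev z x]
      _ ≤ ψstar⁻¹ * (L * s * R) + ψstar⁻¹ * (L * s * R) + s := by
          linarith
      _ ≤ (ψstar ^ 2)⁻¹ * (L * s * R) + (ψstar ^ 2)⁻¹ * (L * s * R) + s := by
          have h : (0:ℝ) ≤ L * s * R := by positivity
          gcongr <;> positivity
      _ = (2 * R * L / ψstar ^ 2 + 1) * s := by
          field_simp
          ring
  · -- boundedness
    rw [hFw x hx]
    have hxR : ‖x‖ ≤ R := hnorm_ball x hx
    calc ‖A⁻¹ • Mx - x‖ ≤ ‖A⁻¹ • Mx‖ + ‖x‖ := norm_sub_le _ _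
      _ = A⁻¹ * ‖Mx‖ + ‖x‖ := by
          rw [norm_smul, Real.norm_eq_abs, abs_of_pos (inv_pos.mpr hA0)]
      _ ≤ A⁻¹ * (R * A) + R := by
          refine add_le_add (mul_le_mul_of_nonneg_left (hm_bound x hx) (by positivity)) hxR
      _ = R + R := by
          rw [mul_comm R A, ← mul_assoc, inv_mul_cancel₀ hA0.ne', one_mul]
      _ = R * (1 + 1) := by ring
      _ ≤ R * (1 / ψstar + 1) := by
          have h1 : (1:ℝ) ≤ 1 / ψstar := by
            rw [le_div_iff₀ hψstar]; linarith
          gcongr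
end

section
/- Let ψ : [0,∞) → (0,∞) be Lipschitz with constant L and bounded by 1, let μ be a probability measure on ℝ^d supported in B(0,R), and let T, S : ℝ^d → ℝ^d be maps. Then for x ∈ B(0,R): |∫ ψ(|x−y|)(y−x) dμ(y) − ∫ ψ(|T(x) − S(y)|)(S(y) − T(x)) dμ(y)| ≤ (1 + 2RL)(|x − T(x)| + ∫ |y − S(y)| dμ(y)), provided |T(x)| ≤ R and |S(y)| ≤ R on supp μ. -/
/-! The field `v z = ψ ‖z‖ • z` satisfies `‖v a - v b‖ ≤ (1 + L ‖a‖) ‖a - b‖`, by splitting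
`v a - v b = ψ ‖b‖ • (a - b) + (ψ ‖a‖ - ψ ‖b‖) • a`. Take `a = y - x` and `b = S y - T x`, so that
`‖a‖ ≤ 2R` on the support of `μ` and `a - b = (y - S y) - (x - T x)`, and integrate in `y`. -/

open MeasureTheory Set

section RadialField

variable {α E : Type*} [MeasurableSpace α] {μ : Measure α} [NormedAddCommGroup E]

theorem integral_norm_sub_sub_sub_le [IsProbabilityMeasure μ] {f g : α → E}
    (hfg : Integrable (fun y => f y - g y) μ) (a b : E) :
    ∫ y, ‖(f y - a) - (g y - b)‖ ∂μ ≤ ‖a - b‖ + ∫ y, ‖f y - g y‖ ∂μ := by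
  simp_rw [sub_sub_sub_comm _ a]
  calc _ ≤ ∫ y, (‖a - b‖ + ‖f y - g y‖) ∂μ :=
        integral_mono (hfg.sub (integrable_const (a - b))).norm
          ((integrable_const _).add hfg.norm) fun y => (norm_sub_le _ _).trans_eq (add_comm _ _)
    _ = _ := by rw [integral_add (integrable_const _) hfg.norm, integral_const]; simp

variable [NormedSpace ℝ E]

theorem norm_smul_sub_smul_le_of_lipschitzOnWith {ψ : ℝ → ℝ} {L : NNReal}
    (hL : LipschitzOnWith L ψ (Ici 0)) (a b : E) (hb : |ψ ‖b‖| ≤ 1) :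
    ‖ψ ‖a‖ • a - ψ ‖b‖ • b‖ ≤ (1 + L * ‖a‖) * ‖a - b‖ := by
  have hψ : |ψ ‖a‖ - ψ ‖b‖| ≤ L * ‖a - b‖ :=
    calc |ψ ‖a‖ - ψ ‖b‖| ≤ L * |‖a‖ - ‖b‖| :=
          hL.dist_le_mul _ (norm_nonneg a) _ (norm_nonneg b)
      _ ≤ L * ‖a - b‖ := by gcongr; exact abs_norm_sub_norm_le a b
  calc ‖ψ ‖a‖ • a - ψ ‖b‖ • b‖ = ‖ψ ‖b‖ • (a - b) + (ψ ‖a‖ - ψ ‖b‖) • a‖ := by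
        rw [smul_sub, sub_smul]; congr 1; abel
    _ ≤ |ψ ‖b‖| * ‖a - b‖ + |ψ ‖a‖ - ψ ‖b‖| * ‖a‖ := by
        grw [norm_add_le, norm_smul, norm_smul, Real.norm_eq_abs, Real.norm_eq_abs]
    _ ≤ 1 * ‖a - b‖ + L * ‖a - b‖ * ‖a‖ := by gcongr
    _ = (1 + L * ‖a‖) * ‖a - b‖ := by ring

theorem MeasureTheory.Integrable.smul_norm_comp {ψ : ℝ → ℝ} (hψc : ContinuousOn ψ (Ici 0))
    (hψ : ∀ r, 0 ≤ r → |ψ r| ≤ 1) {g : α → E} (hg : Integrable g μ) :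
    Integrable (fun y => ψ ‖g y‖ • g y) μ :=
  hg.bdd_smul (φ := fun y => ψ ‖g y‖) 1
    ((hψc.comp_continuous continuous_norm norm_nonneg).comp_aestronglyMeasurable hg.1)
    (ae_of_all μ fun _ => hψ _ (norm_nonneg _))

theorem norm_integral_smul_sub_integral_smul_le {ψ : ℝ → ℝ} {L : NNReal}
    (hL : LipschitzOnWith L ψ (Ici 0)) (hψ : ∀ r, 0 ≤ r → |ψ r| ≤ 1) {f g : α → E}
    (hf : Integrable f μ) (hg : Integrable g μ) {C : ℝ} (hfC : ∀ᵐ y ∂μ, ‖f y‖ ≤ C) :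
    ‖∫ y, ψ ‖f y‖ • f y ∂μ - ∫ y, ψ ‖g y‖ • g y ∂μ‖ ≤
      (1 + C * L) * ∫ y, ‖f y - g y‖ ∂μ := by
  rw [← integral_sub (hf.smul_norm_comp hL.continuousOn hψ)
    (hg.smul_norm_comp hL.continuousOn hψ), ← integral_const_mul]
  refine norm_integral_le_of_norm_le ((hf.sub hg).norm.const_mul _) ?_
  filter_upwards [hfC] with y hy
  calc _ ≤ (1 + L * ‖f y‖) * ‖f y - g y‖ :=
        norm_smul_sub_smul_le_of_lipschitzOnWith hL _ _ (hψ _ (norm_nonneg _))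
    _ ≤ (1 + C * L) * ‖f y - g y‖ := by
        gcongr ?_ * _
        linarith [mul_le_mul_of_nonneg_left hy L.coe_nonneg]

end RadialField

open MeasureTheory in
theorem stability_core_estimate_general {d : ℕ}
    (ψ : ℝ → ℝ) (L : NNReal) (hL : LipschitzOnWith L ψ (Set.Ici 0))
    (hψ01 : ∀ r, 0 ≤ r → 0 ≤ ψ r ∧ ψ r ≤ 1)
    (R : ℝ)
    (μ : Measure (EuclideanSpace ℝ (Fin d))) [IsProbabilityMeasure μ]
    (hsupp : μ (Metric.closedBall (0 : EuclideanSpace ℝ (Fin d)) R)ᶜ = 0)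
    (T S : EuclideanSpace ℝ (Fin d) → EuclideanSpace ℝ (Fin d))
    (hS : Measurable S)
    (x : EuclideanSpace ℝ (Fin d)) (hx : ‖x‖ ≤ R)
    (hSy : ∀ᵐ y ∂μ, ‖S y‖ ≤ R) :
    ‖(∫ y, ψ ‖x - y‖ • (y - x) ∂μ) -
        ∫ y, ψ ‖T x - S y‖ • (S y - T x) ∂μ‖ ≤
      (1 + 2 * R * L) * (‖x - T x‖ + ∫ y, ‖y - S y‖ ∂μ) := by
  have hψ : ∀ r, 0 ≤ r → |ψ r| ≤ 1 := fun r hr =>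
    abs_le.2 ⟨by linarith [(hψ01 r hr).1], (hψ01 r hr).2⟩
  have hy : ∀ᵐ y ∂μ, ‖y‖ ≤ R := by
    filter_upwards [mem_ae_iff.2 hsupp] with y hy using mem_closedBall_zero_iff.1 hy
  have hid : Integrable id μ := .of_bound measurable_id.aestronglyMeasurable R hy
  have hSint : Integrable S μ := .of_bound hS.aestronglyMeasurable R hSy
  have hf : Integrable (fun y => y - x) μ := hid.sub (integrable_const x)
  have hg : Integrable (fun y => S y - T x) μ := hSint.sub (integrable_const (T x))
  have hyx : ∀ᵐ y ∂μ, ‖y - x‖ ≤ 2 * R := by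
    filter_upwards [hy] with y hy
    grw [norm_sub_le, hy, hx]; linarith
  have hR : 0 ≤ R := (norm_nonneg x).trans hx
  calc _ = ‖∫ y, ψ ‖y - x‖ • (y - x) ∂μ - ∫ y, ψ ‖S y - T x‖ • (S y - T x) ∂μ‖ := by
        simp only [norm_sub_rev x, norm_sub_rev (T x) (S _)]
    _ ≤ (1 + 2 * R * L) * ∫ y, ‖(y - x) - (S y - T x)‖ ∂μ :=
        norm_integral_smul_sub_integral_smul_le hL hψ hf hg hyx
    _ ≤ _ := by
        gcongr
        exact integral_norm_sub_sub_sub_le (f := fun y => y) (hid.sub hSint) x (T x)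

open MeasureTheory in
theorem stability_core_estimate {d : ℕ}
    (ψ : ℝ → ℝ) (L : NNReal) (hL : LipschitzOnWith L ψ (Set.Ici 0))
    (hψ01 : ∀ r, 0 ≤ r → 0 ≤ ψ r ∧ ψ r ≤ 1)
    (R : ℝ) (hR : 0 ≤ R)
    (μ : Measure (EuclideanSpace ℝ (Fin d))) [IsProbabilityMeasure μ]
    (hsupp : μ (Metric.closedBall (0 : EuclideanSpace ℝ (Fin d)) R)ᶜ = 0)
    (T S : EuclideanSpace ℝ (Fin d) → EuclideanSpace ℝ (Fin d))
    (hS : Measurable S)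
    (x : EuclideanSpace ℝ (Fin d)) (hx : ‖x‖ ≤ R) (hTx : ‖T x‖ ≤ R)
    (hSy : ∀ᵐ y ∂μ, ‖S y‖ ≤ R) :
    ‖(∫ y, ψ ‖x - y‖ • (y - x) ∂μ) -
        ∫ y, ψ ‖T x - S y‖ • (S y - T x) ∂μ‖ ≤
      (1 + 2 * R * L) * (‖x - T x‖ + ∫ y, ‖y - S y‖ ∂μ) :=
  stability_core_estimate_general ψ L hL hψ01 R μ hsupp T S hS x hx hSy
end

section
/- Let u : [−τ₀, ∞) → [0,∞) be continuous, differentiable on (0,∞), satisfying u'(t) ≤ K(u(t) + u(t−τ(t))) for all t > 0, where K > 0 and τ : [0,∞) → [τ*, τ₀] with 0 < τ* ≤ τ₀. Let ū = max_{s∈[−τ₀,0]} u(s). Then for every k ≥ 1 and t ∈ ((k−1)τ*, kτ*], u(t) ≤ ū e^{Kt}(1 + Kτ*)^k. -/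
/-!
With the integrating factor `w t = exp (-K t) * u t` the hypothesis becomes
`w' t ≤ K exp (-K t) u (t - τ t)`. Since `τ t ≥ τstar`, on `(k τstar, (k+1) τstar]` the delayed
argument lies in `[-τ₀, k τstar]`, where by induction `u ≤ ubar exp (K max s 0) (1 + K τstar)^k`;
so `w' ≤ K ubar (1 + K τstar)^k` there, and integrating over an interval of length `τstar`
multiplies the bound by `1 + K τstar`.
-/

open Real Set

theorem exp_neg_mul_mul_sub_le_of_hasDerivAt {u u' v : ℝ → ℝ} {K a b B : ℝ} (hab : a ≤ b)
    (hcont : ContinuousOn u (Icc a b)) (hderiv : ∀ s ∈ Ioo a b, HasDerivAt u (u' s) s)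
    (hineq : ∀ s ∈ Ioo a b, u' s ≤ K * u s + v s)
    (hv : ∀ s ∈ Ioo a b, exp (-(K * s)) * v s ≤ B) :
    exp (-(K * b)) * u b - exp (-(K * a)) * u a ≤ B * (b - a) := by
  set w : ℝ → ℝ := fun s ↦ exp (-(K * s)) * u s
  have hw : ∀ s ∈ Ioo a b, HasDerivAt w (exp (-(K * s)) * (u' s - K * u s)) s := fun s hs ↦ by
    have hlin : HasDerivAt (fun s ↦ -(K * s)) (-K) s := by
      simpa using ((hasDerivAt_id s).const_mul K).fun_neg
    exact (hlin.exp.mul (hderiv s hs)).congr_deriv (by ring)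
  rw [← interior_Icc] at hw
  refine (convex_Icc a b).image_sub_le_mul_sub_of_deriv_le (f := w)
    ((by fun_prop : Continuous fun s ↦ exp (-(K * s))).continuousOn.mul hcont)
    (fun s hs ↦ (hw s hs).differentiableAt.differentiableWithinAt) (fun s hs ↦ ?_)
    a (left_mem_Icc.2 hab) b (right_mem_Icc.2 hab) hab
  rw [(hw s hs).deriv]
  rw [interior_Icc] at hs
  calc exp (-(K * s)) * (u' s - K * u s) ≤ exp (-(K * s)) * v s := by
        gcongr; linarith [hineq s hs]
    _ ≤ B := hv s hs

section DelayedGronwall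

variable {u u' τ : ℝ → ℝ} {K τstar τ₀ ubar : ℝ}

theorem delayed_gronwall_succ (hK : 0 ≤ K) (hτstar : 0 ≤ τstar) (hτ₀ : 0 ≤ τ₀)
    (hτ : ∀ t, 0 ≤ t → τstar ≤ τ t ∧ τ t ≤ τ₀)
    (hcont : ContinuousOn u (Ici (-τ₀)))
    (hnonneg : ∀ t, -τ₀ ≤ t → 0 ≤ u t)
    (hderiv : ∀ t, 0 < t → HasDerivAt u (u' t) t)
    (hineq : ∀ t, 0 < t → u' t ≤ K * (u t + u (t - τ t)))
    (hubar : 0 ≤ ubar) (k : ℕ)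
    (ih : ∀ t ∈ Icc (-τ₀) (k * τstar),
      exp (-(K * max t 0)) * u t ≤ ubar * (1 + K * τstar) ^ k) :
    ∀ t ∈ Icc (-τ₀) ((k + 1 : ℕ) * τstar),
      exp (-(K * max t 0)) * u t ≤ ubar * (1 + K * τstar) ^ (k + 1) := by
  set a : ℝ := k * τstar
  have ha : 0 ≤ a := by positivity
  rintro t ⟨ht₀, ht⟩
  push_cast at ht
  rcases le_or_gt t a with hta | hat
  · calc exp (-(K * max t 0)) * u t ≤ ubar * (1 + K * τstar) ^ k := ih t ⟨ht₀, hta⟩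
      _ ≤ ubar * (1 + K * τstar) ^ (k + 1) := by
        gcongr
        · nlinarith
        · omega
  have hdelay : ∀ s ∈ Ioo a t,
      exp (-(K * s)) * (K * u (s - τ s)) ≤ K * (ubar * (1 + K * τstar) ^ k) := by
    rintro s ⟨has, hst⟩
    obtain ⟨hτs_lo, hτs_hi⟩ := hτ s (ha.trans has.le)
    have hmem : s - τ s ∈ Icc (-τ₀) a := ⟨by linarith, by linarith⟩
    calc exp (-(K * s)) * (K * u (s - τ s))
        ≤ K * (exp (-(K * max (s - τ s) 0)) * u (s - τ s)) := by
          rw [mul_left_comm]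
          gcongr
          · exact hnonneg _ hmem.1
          · exact max_le (by linarith) (by linarith)
      _ ≤ K * (ubar * (1 + K * τstar) ^ k) := mul_le_mul_of_nonneg_left (ih _ hmem) hK
  have hstep := exp_neg_mul_mul_sub_le_of_hasDerivAt hat.le
    (hcont.mono fun s hs ↦ le_trans (by linarith) hs.1)
    (fun s hs ↦ hderiv s (ha.trans_lt hs.1))
    (fun s hs ↦ (hineq s (ha.trans_lt hs.1)).trans_eq (mul_add _ _ _)) hdelay
  have hleft := ih a ⟨by linarith, le_rfl⟩
  rw [max_eq_left ha] at hleft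
  rw [max_eq_left (ha.trans hat.le)]
  calc exp (-(K * t)) * u t
        ≤ ubar * (1 + K * τstar) ^ k + K * (ubar * (1 + K * τstar) ^ k) * τstar := by
        have hlen : K * (ubar * (1 + K * τstar) ^ k) * (t - a)
            ≤ K * (ubar * (1 + K * τstar) ^ k) * τstar := by gcongr; linarith
        linarith
    _ = ubar * (1 + K * τstar) ^ (k + 1) := by ring

theorem delayed_gronwall_exp_neg_max (hK : 0 ≤ K) (hτstar : 0 ≤ τstar) (hτ₀ : 0 ≤ τ₀)
    (hτ : ∀ t, 0 ≤ t → τstar ≤ τ t ∧ τ t ≤ τ₀)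
    (hcont : ContinuousOn u (Ici (-τ₀)))
    (hnonneg : ∀ t, -τ₀ ≤ t → 0 ≤ u t)
    (hderiv : ∀ t, 0 < t → HasDerivAt u (u' t) t)
    (hineq : ∀ t, 0 < t → u' t ≤ K * (u t + u (t - τ t)))
    (hubar : ∀ s ∈ Icc (-τ₀) 0, u s ≤ ubar) (k : ℕ) :
    ∀ t ∈ Icc (-τ₀) (k * τstar), exp (-(K * max t 0)) * u t ≤ ubar * (1 + K * τstar) ^ k := by
  have hubar₀ : 0 ≤ ubar := (hnonneg 0 (by linarith)).trans (hubar 0 ⟨by linarith, le_rfl⟩)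
  induction k with
  | zero =>
    rintro t ⟨ht₀, ht⟩
    rw [Nat.cast_zero, zero_mul] at ht
    simpa [max_eq_right ht] using hubar t ⟨ht₀, ht⟩
  | succ k ih =>
    exact delayed_gronwall_succ hK hτstar hτ₀ hτ hcont hnonneg hderiv hineq hubar₀ k ih

end DelayedGronwall

theorem delayed_gronwall (u u' τ : ℝ → ℝ) (K τstar τ₀ ubar : ℝ)
    (hK : 0 < K) (hτstar : 0 < τstar) (hτ₀ : τstar ≤ τ₀)
    (hτ : ∀ t, 0 ≤ t → τstar ≤ τ t ∧ τ t ≤ τ₀)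
    (hcont : ContinuousOn u (Set.Ici (-τ₀)))
    (hnonneg : ∀ t, -τ₀ ≤ t → 0 ≤ u t)
    (hderiv : ∀ t, 0 < t → HasDerivAt u (u' t) t)
    (hineq : ∀ t, 0 < t → u' t ≤ K * (u t + u (t - τ t)))
    (hubar : ∀ s ∈ Set.Icc (-τ₀) 0, u s ≤ ubar) :
    ∀ k : ℕ, 1 ≤ k → ∀ t, ((k : ℝ) - 1) * τstar < t → t ≤ (k : ℝ) * τstar →
      u t ≤ ubar * Real.exp (K * t) * (1 + K * τstar) ^ k := by
  intro k hk t ht_lo ht_hi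
  have ht : 0 < t := lt_of_le_of_lt (mul_nonneg (by simpa using hk) hτstar.le) ht_lo
  have hτ₀' : 0 ≤ τ₀ := hτstar.le.trans hτ₀
  have hbound := delayed_gronwall_exp_neg_max hK.le hτstar.le hτ₀' hτ hcont hnonneg hderiv
    hineq hubar k t ⟨by linarith, ht_hi⟩
  rwa [max_eq_left ht.le, exp_neg, inv_mul_le_iff₀ (exp_pos _), ← mul_assoc,
    mul_comm (exp _)] at hbound
end

section
/- Let x_1,…,x_N : [−τ̄,∞) → ℝ^d be C¹ solutions of the delayed Hegselmann–Krause system with communication rates satisfying ψ₀ ≤ a_{ij}(t) ≤ 1/ψ₀ for a constant ψ₀ ∈ (0,1], delay τ ∈ W^{1,∞} with 0 ≤ τ(t) ≤ τ̄ and τ'(t) ≤ c < 1, and coupling λ > 0. If τ̄ < ln(1 + ψ₀³(1−c)/((2+ψ₀²)λ)), then there exist constants γ, C > 0, independent of N, such that the diameter d_X(t) = max_{i,j}|x_i(t) − x_j(t)| satisfies d_X(t) ≤ C e^{−γt} for all t ≥ 0. -/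
/-!
Write `D` for the diameter of the configuration and `H` for a bound on the speeds. Delayed
positions differ from current ones by at most `τ̄ H`, so at a pair realising the diameter
`D' ≤ -λψ₀ (D - α H)`, while the equation itself gives speeds `≤ β D + θ H` one delay later, with
`α = 2τ̄/ψ₀²`, `β = λ/ψ₀`, `θ = λτ̄/ψ₀`. After a waiting time `2τ̄ + s₀` the bounds `(D, H)` thus
improve to `(ε D + α H', H')` with `H' = β D + θ H` and `ε = exp (-λψ₀ s₀)`. The smallness of `τ̄`
gives `α β + θ < 1`, which makes this linear recursion a contraction for a weighted norm
`D + μ H`, and geometric decay over windows of fixed length is exponential decay. The initial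
bounds come from the invariance of the ball containing the initial history.
-/

open Set Filter Topology Real Finset
open scoped RealInnerProductSpace

theorem HasDerivAt.norm {E : Type*} [NormedAddCommGroup E] [InnerProductSpace ℝ E] {f : ℝ → E}
    {f' : E} {t : ℝ} (hf : HasDerivAt f f' t) (h0 : f t ≠ 0) :
    HasDerivAt (fun u => ‖f u‖) (⟪f t, f'⟫ / ‖f t‖) t := by
  have h := hf.norm_sq.sqrt (pow_ne_zero 2 (norm_ne_zero_iff.2 h0))
  simp only [sqrt_sq (norm_nonneg _)] at h
  convert h using 1
  field_simp

theorem inner_sub_nonpos_of_norm_le {E : Type*} [NormedAddCommGroup E] [InnerProductSpace ℝ E]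
    {u v : E} (h : ‖u‖ ≤ ‖v‖) : ⟪u - v, v⟫ ≤ 0 := by
  rw [inner_sub_left, real_inner_self_eq_norm_sq]
  nlinarith [real_inner_le_norm u v, norm_nonneg v]

theorem forall_le_of_first_touch {ι : Type*} [Finite ι] {f : ι → ℝ → ℝ} {B B' : ℝ → ℝ} {t₀ : ℝ}
    (hf : ∀ i, ContinuousOn (f i) (Ici t₀)) (hB : ∀ t, HasDerivAt B (B' t) t)
    (hinit : ∀ i, f i t₀ < B t₀)
    (htouch : ∀ t, t₀ < t → (∀ i, ∀ s ∈ Icc t₀ t, f i s ≤ B s) → ∀ i, f i t = B t →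
      ∃ v, HasDerivAt (f i) v t ∧ v < B' t) :
    ∀ t, t₀ ≤ t → ∀ i, f i t ≤ B t := by
  by_contra! hbad
  obtain ⟨T, hT, i₀, hi₀⟩ := hbad
  set S := {u | t₀ ≤ u ∧ ∃ i, B u < f i u}
  have hSne : S.Nonempty := ⟨T, hT, i₀, hi₀⟩
  have hSbdd : BddBelow S := ⟨t₀, fun u hu => hu.1⟩
  obtain ⟨c, hcS⟩ : ∃ c, sInf S = c := ⟨_, rfl⟩
  have hc : t₀ ≤ c := hcS ▸ le_csInf hSne fun u hu => hu.1
  have hcle : ∀ u ∈ S, c ≤ u := fun u hu => hcS ▸ csInf_le hSbdd hu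
  have hBcont : Continuous B := continuous_iff_continuousAt.2 fun t => (hB t).continuousAt
  have hbefore : ∀ i, ∀ s ∈ Ico t₀ c, f i s ≤ B s := fun i s hs =>
    not_lt.1 fun h => hs.2.not_ge (hcle s ⟨hs.1, i, h⟩)
  have hatc : ∀ i, f i c ≤ B c := by
    intro i
    rcases hc.eq_or_lt with htc | htc
    · exact htc ▸ (hinit i).le
    · exact ContinuousWithinAt.closure_le (by simp [closure_Ico htc.ne, htc.le])
        ((hf i c hc).mono Ico_subset_Ici_self) hBcont.continuousWithinAt (hbefore i)
  have hhist : ∀ i, ∀ s ∈ Icc t₀ c, f i s ≤ B s := fun i s hs =>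
    hs.2.lt_or_eq.elim (fun hsc => hbefore i s ⟨hs.1, hsc⟩) fun hsc => hsc ▸ hatc i
  have hafter : ∀ i, ∀ᶠ u in 𝓝[>] c, f i u ≤ B u := by
    intro i
    rcases (hatc i).lt_or_eq with hlt | heq
    · exact (((hf i c hc).mono (Ioi_subset_Ici hc)).eventually_lt
        hBcont.continuousWithinAt hlt).mono fun u hu => hu.le
    · have hc' : t₀ < c := hc.lt_of_ne fun htc => (hinit i).ne (htc ▸ heq)
      obtain ⟨v, hv, hvB⟩ := htouch c hc' hhist i heq
      -- `f i - B` vanishes at `c` and has negative derivative there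
      have hslope := ((hv.sub (hB c)).hasDerivWithinAt (s := Ioi c)).limsup_slope_le'
        (lt_irrefl c) (sub_neg.2 hvB)
      filter_upwards [hslope, self_mem_nhdsWithin] with u hu hcu
      rw [slope_def_field, Pi.sub_apply, Pi.sub_apply, heq, sub_self, sub_zero,
        div_neg_iff] at hu
      rcases hu with ⟨-, hu⟩ | ⟨hu, -⟩
      · exact ((sub_pos.2 hcu).not_gt hu).elim
      · exact (sub_neg.1 hu).le
  obtain ⟨d, hcd, hsub⟩ := mem_nhdsGT_iff_exists_Ioo_subset.1 (eventually_all.2 hafter)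
  have hdc : d ≤ c := by
    refine hcS ▸ le_csInf hSne fun u ⟨hu, i, hi⟩ => not_lt.1 fun hud => ?_
    rcases (hcle u ⟨hu, i, hi⟩).lt_or_eq with hcu | hcu
    · exact (hsub ⟨hcu, hud⟩ i).not_gt hi
    · exact (hcu ▸ hatc i).not_gt hi
  exact (mem_Ioi.1 hcd).not_ge hdc

theorem le_exp_decay_of_deriv_le_at_max {ι : Type*} [Finite ι] {f : ι → ℝ → ℝ}
    {t₁ A m G : ℝ} (hA : 0 < A) (hm : 0 ≤ m) (hG : 0 ≤ G)
    (hf : ∀ i, ContinuousOn (f i) (Ici t₁)) (hinit : ∀ i, f i t₁ ≤ G)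
    (hmax : ∀ u, t₁ < u → ∀ i, (∀ j, f j u ≤ f i u) → 0 < f i u →
      ∃ v, HasDerivAt (f i) v u ∧ v ≤ -A * (f i u - m)) :
    ∀ t, t₁ ≤ t → ∀ i, f i t ≤ m + (G - m) * exp (-A * (t - t₁)) := by
  intro t ht i
  refine le_of_forall_pos_le_add fun δ hδ => ?_
  set E : ℝ → ℝ := fun u => exp (-A * (u - t₁))
  have hE : ∀ u, HasDerivAt E (-A * E u) u := fun u => by
    simpa [E, mul_comm] using (((hasDerivAt_id u).sub_const t₁).const_mul (-A)).exp
  have key := forall_le_of_first_touch (B := fun u => m + δ + (G - m) * E u)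
    (B' := fun u => -A * ((G - m) * E u)) hf
    (fun u => by simpa [mul_left_comm] using ((hE u).const_mul (G - m)).const_add (m + δ))
    (fun j => by simp only [E, sub_self, mul_zero, exp_zero]; linarith [hinit j]) ?_ t ht i
  · linarith
  intro u hu hhist j hj
  have hEpos : 0 < E u := exp_pos _
  have hE1 : E u ≤ 1 := exp_le_one_iff.2 (by nlinarith)
  obtain ⟨v, hv, hvle⟩ := hmax u hu j (fun k => hj ▸ hhist k u ⟨hu.le, le_rfl⟩)
    (by rw [hj]; nlinarith [mul_nonneg hm (sub_nonneg.2 hE1), mul_nonneg hG hEpos.le])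
  exact ⟨v, hv, by rw [hj] at hvle; nlinarith⟩

theorem delay_coupling_lt_one {τbar lam ψ₀ c : ℝ} (hlam : 0 < lam) (hψ₀ : 0 < ψ₀)
    (hc0 : 0 < c) (hc1 : c < 1)
    (h : τbar < log (1 + ψ₀ ^ 3 * (1 - c) / ((2 + ψ₀ ^ 2) * lam))) :
    2 * τbar / ψ₀ ^ 2 * (lam / ψ₀) + lam * τbar / ψ₀ < 1 := by
  have hden : 0 < (2 + ψ₀ ^ 2) * lam := by positivity
  have hy : 0 < ψ₀ ^ 3 * (1 - c) / ((2 + ψ₀ ^ 2) * lam) := by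
    have : 0 < 1 - c := by linarith
    positivity
  have hτ : τbar * ((2 + ψ₀ ^ 2) * lam) < ψ₀ ^ 3 * (1 - c) :=
    (lt_div_iff₀ hden).1 (h.trans_le ((log_le_sub_one_of_pos (by linarith)).trans_eq
      (add_sub_cancel_left _ _)))
  have hψ₃ : 0 < ψ₀ ^ 3 := by positivity
  rw [show 2 * τbar / ψ₀ ^ 2 * (lam / ψ₀) + lam * τbar / ψ₀ =
      τbar * ((2 + ψ₀ ^ 2) * lam) / ψ₀ ^ 3 by field_simp, div_lt_one hψ₃]
  nlinarith

theorem exists_weighted_contraction {α β θ : ℝ} (hα : 0 ≤ α) (hβ : 0 < β) (hθ : 0 ≤ θ)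
    (h : α * β + θ < 1) :
    ∃ ε μ κ : ℝ, 0 < ε ∧ ε < 1 ∧ 0 < μ ∧ 0 < κ ∧ κ < 1 ∧ ∀ G H, 0 ≤ G → 0 ≤ H →
      ε * G + α * (β * G + θ * H) + μ * (β * G + θ * H) ≤ κ * (G + μ * H) := by
  have hθ1 : 0 < 1 - θ := by nlinarith
  -- the weight `μ` must lie strictly between `θ α / (1 - θ)` and `(1 - α β) / β`
  have hgap : θ * α / (1 - θ) < (1 - α * β) / β := by
    rw [div_lt_div_iff₀ hθ1 hβ]; nlinarith
  set μ := (θ * α / (1 - θ) + (1 - α * β) / β) / 2 with hμ_def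
  have hμlo : θ * α < μ * (1 - θ) := (div_lt_iff₀ hθ1).1 (by linarith)
  have hμhi : μ * β < 1 - α * β := (lt_div_iff₀ hβ).1 (by linarith)
  have hμ : 0 < μ := pos_of_mul_pos_left (hμlo.trans_le' (by positivity)) hθ1.le
  set ε := (1 - α * β - μ * β) / 2 with hε_def
  set κ := max (ε + α * β + μ * β) (θ * (α + μ) / μ)
  have hαβ : 0 ≤ α * β := by positivity
  refine ⟨ε, μ, κ, by linarith, by nlinarith, hμ, lt_max_of_lt_left (by nlinarith),
    max_lt (by linarith) ((div_lt_one hμ).2 (by linarith)), fun G H hG hH => ?_⟩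
  have hGc : (ε + α * β + μ * β) * G ≤ κ * G := by gcongr; exact le_max_left _ _
  have hHc : θ * (α + μ) * H ≤ κ * μ * H :=
    mul_le_mul_of_nonneg_right ((div_le_iff₀ hμ).1 (le_max_right _ _)) hH
  linear_combination hGc + hHc

theorem exists_exp_decay_of_geometric {D : ℝ → ℝ} {T L M Z κ : ℝ} (hL : 0 < L)
    (hκ0 : 0 < κ) (hκ1 : κ < 1) (hM : ∀ t, 0 ≤ t → D t ≤ M)
    (hgeom : ∀ n : ℕ, ∀ t, T + n * L ≤ t → D t ≤ Z * κ ^ n) :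
    ∃ γ C : ℝ, 0 < γ ∧ 0 < C ∧ ∀ t, 0 ≤ t → D t ≤ C * exp (-γ * t) := by
  set γ := -log κ / L
  have hγ : 0 < γ := div_pos (neg_pos.2 (log_neg hκ0 hκ1)) hL
  have hκγ : κ = exp (-γ * L) := by
    rw [show -γ * L = log κ by simp only [γ]; field_simp, exp_log hκ0]
  set K := max (max M Z) 1
  have hK : 0 < K := lt_max_of_lt_right one_pos
  refine ⟨γ, K * exp (γ * (T + L)), hγ, by positivity, fun t ht => ?_⟩
  rw [mul_assoc, ← exp_add]
  rcases lt_or_ge t T with htT | hTt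
  · calc D t ≤ K := (hM t ht).trans ((le_max_left _ _).trans (le_max_left _ _))
      _ ≤ K * exp (γ * (T + L) + -γ * t) :=
        le_mul_of_one_le_right hK.le (one_le_exp (by nlinarith))
  · set n := ⌊(t - T) / L⌋₊
    have hn : T + n * L ≤ t := by
      have := Nat.floor_le (div_nonneg (sub_nonneg.2 hTt) hL.le)
      rw [le_div_iff₀ hL] at this; linarith
    have hn' : t - T < (n + 1) * L := by
      have := Nat.lt_floor_add_one ((t - T) / L)
      rwa [div_lt_iff₀ hL] at this
    calc D t ≤ Z * κ ^ n := hgeom n t hn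
      _ ≤ K * κ ^ n := by gcongr; exact (le_max_right _ _).trans (le_max_left _ _)
      _ = K * exp (-γ * (n * L)) := by rw [hκγ, ← exp_nat_mul]; ring_nf
      _ ≤ K * exp (γ * (T + L) + -γ * t) := by gcongr; nlinarith

section HKField

variable {ι E : Type*} [Fintype ι] [DecidableEq ι]

/-- The velocity of agent `i` in the delayed Hegselmann–Krause system, for current positions `y`
and delayed positions `z`. -/
noncomputable def hkField [AddCommGroup E] [Module ℝ E] (lam : ℝ) (a : ι → ι → ℝ) (y z : ι → E)
    (i : ι) : E :=
  (lam / Fintype.card ι) • ∑ j ∈ univ.erase i, a i j • (z j - y i)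

variable [NormedAddCommGroup E] [InnerProductSpace ℝ E] {lam b K e ψ₀ : ℝ}
  {a : ι → ι → ℝ} {y z : ι → E}

theorem norm_hkField_le {i : ι} (hlam : 0 ≤ lam) (ha : ∀ j, |a i j| ≤ b)
    (hK : ∀ j, ‖z j - y i‖ ≤ K) : ‖hkField lam a y z i‖ ≤ lam * b * K := by
  have hN : (0 : ℝ) < Fintype.card ι := Nat.cast_pos.2 (Fintype.card_pos_iff.2 ⟨i⟩)
  have hbK : 0 ≤ b * K := mul_nonneg ((abs_nonneg _).trans (ha i)) ((norm_nonneg _).trans (hK i))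
  have hsum : ‖∑ j ∈ univ.erase i, a i j • (z j - y i)‖ ≤ Fintype.card ι * (b * K) :=
    calc ‖∑ j ∈ univ.erase i, a i j • (z j - y i)‖
        ≤ ∑ j ∈ univ.erase i, b * K := norm_sum_le_of_le _ fun j _ => by
          rw [norm_smul, Real.norm_eq_abs]
          exact mul_le_mul (ha j) (hK j) (norm_nonneg _) ((abs_nonneg _).trans (ha j))
      _ ≤ ∑ _j : ι, b * K := sum_le_univ_sum_of_nonneg fun _ => hbK
      _ = Fintype.card ι * (b * K) := by simp
  rw [hkField, norm_smul, Real.norm_of_nonneg (by positivity)]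
  calc lam / Fintype.card ι * ‖∑ j ∈ univ.erase i, a i j • (z j - y i)‖
      ≤ lam / Fintype.card ι * (Fintype.card ι * (b * K)) := by gcongr
    _ = lam * b * K := by field_simp

theorem inner_hkField_self_nonpos {i : ι} (hlam : 0 ≤ lam) (ha : ∀ j, 0 ≤ a i j)
    (hz : ∀ j, ‖z j‖ ≤ ‖y i‖) : ⟪hkField lam a y z i, y i⟫ ≤ 0 := by
  rw [hkField, real_inner_smul_left, sum_inner]
  refine mul_nonpos_of_nonneg_of_nonpos (by positivity) (sum_nonpos fun j _ => ?_)
  rw [real_inner_smul_left]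
  exact mul_nonpos_of_nonneg_of_nonpos (ha j) (inner_sub_nonpos_of_norm_le (hz j))

/-- An agent `i` lying furthest in the direction `w` is pulled back against `w`, up to the
error made by using the delayed positions `z` instead of the current ones `y`. -/
theorem inner_hkField_le_of_extreme {i : ι} {w : E} (hψ₀ : 0 < ψ₀) (hlam : 0 ≤ lam)
    (ha : ∀ j, ψ₀ ≤ a i j ∧ a i j ≤ 1 / ψ₀) (hz : ∀ j, ‖z j - y j‖ ≤ e)
    (hext : ∀ j, ⟪y j - y i, w⟫ ≤ 0) :
    ⟪hkField lam a y z i, w⟫ ≤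
      lam * ψ₀ / Fintype.card ι * ∑ j, ⟪y j - y i, w⟫ + lam * e * ‖w‖ / ψ₀ := by
  have hN : (0 : ℝ) < Fintype.card ι := Nat.cast_pos.2 (Fintype.card_pos_iff.2 ⟨i⟩)
  have he : 0 ≤ e := (norm_nonneg _).trans (hz i)
  set g : ι → ℝ := fun j => ψ₀ * ⟪y j - y i, w⟫ + e * ‖w‖ / ψ₀
  have hterm : ∀ j, a i j * ⟪z j - y i, w⟫ ≤ g j := by
    intro j
    have hdelay : a i j * ⟪z j - y j, w⟫ ≤ e * ‖w‖ / ψ₀ :=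
      calc a i j * ⟪z j - y j, w⟫ ≤ a i j * (e * ‖w‖) := by
            gcongr
            · exact hψ₀.le.trans (ha j).1
            · exact (real_inner_le_norm _ _).trans (by gcongr; exact hz j)
        _ ≤ 1 / ψ₀ * (e * ‖w‖) := by gcongr; exact (ha j).2
        _ = e * ‖w‖ / ψ₀ := by ring
    rw [show z j - y i = (y j - y i) + (z j - y j) by abel, inner_add_left, mul_add]
    exact add_le_add (mul_le_mul_of_nonpos_right (ha j).1 (hext j)) hdelay
  have hsum : ∑ j ∈ univ.erase i, a i j * ⟪z j - y i, w⟫ ≤ ∑ j, g j :=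
    (sum_le_sum fun j _ => hterm j).trans
      (sum_le_sum_of_subset_of_nonneg (subset_univ _) fun j _ hj => by
        rw [mem_erase, not_and_or, not_not] at hj
        simp only [hj.resolve_right (not_not.2 (mem_univ j)), sub_self, inner_zero_left,
          mul_zero, zero_add, g]
        positivity)
  rw [hkField, real_inner_smul_left, sum_inner]
  simp only [real_inner_smul_left]
  calc lam / Fintype.card ι * ∑ j ∈ univ.erase i, a i j * ⟪z j - y i, w⟫
      ≤ lam / Fintype.card ι * ∑ j, g j := by gcongr
    _ = _ := by
      simp only [g, sum_add_distrib, ← mul_sum, sum_const, card_univ, nsmul_eq_mul]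
      field_simp

theorem inner_hkField_sub_le_of_maximal {p q : ι} (hψ₀ : 0 < ψ₀) (hlam : 0 ≤ lam)
    (ha : ∀ i j, ψ₀ ≤ a i j ∧ a i j ≤ 1 / ψ₀) (hz : ∀ j, ‖z j - y j‖ ≤ e)
    (hmax : ∀ k l, ‖y k - y l‖ ≤ ‖y p - y q‖) :
    ⟪hkField lam a y z p - hkField lam a y z q, y p - y q⟫ ≤
      -(lam * ψ₀) * ‖y p - y q‖ ^ 2 + 2 * lam * e * ‖y p - y q‖ / ψ₀ := by
  have hN : (0 : ℝ) < Fintype.card ι := Nat.cast_pos.2 (Fintype.card_pos_iff.2 ⟨p⟩)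
  -- `p` is extreme in the direction `y p - y q`, and `q` in the opposite direction
  have hp := inner_hkField_le_of_extreme (w := y p - y q) hψ₀ hlam (ha p) hz fun j => by
    simpa using inner_sub_nonpos_of_norm_le (hmax j q)
  have hq := inner_hkField_le_of_extreme (w := y q - y p) hψ₀ hlam (ha q) hz fun j => by
    simpa using inner_sub_nonpos_of_norm_le ((hmax j p).trans (norm_sub_rev (y p) (y q)).le)
  have hsum : ∑ j, ⟪y j - y p, y p - y q⟫ + ∑ j, ⟪y j - y q, y q - y p⟫ =
      -(Fintype.card ι * ‖y p - y q‖ ^ 2) := by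
    rw [← sum_add_distrib, ← real_inner_self_eq_norm_sq]
    simp only [← neg_sub (y p) (y q), inner_neg_right, ← sub_eq_add_neg, ← inner_sub_left,
      sub_sub_sub_cancel_left, sum_const, card_univ, nsmul_eq_mul, inner_neg_left, mul_neg]
  have hFq : ⟪hkField lam a y z q, y q - y p⟫ = -⟪hkField lam a y z q, y p - y q⟫ := by
    rw [← neg_sub, inner_neg_right]
  rw [hFq, norm_sub_rev (y q)] at hq
  have hcancel : lam * ψ₀ / Fintype.card ι * Fintype.card ι = lam * ψ₀ := by field_simp
  rw [inner_sub_left]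
  linear_combination hp + hq + lam * ψ₀ / Fintype.card ι * hsum - ‖y p - y q‖ ^ 2 * hcancel

end HKField

structure IsDelayedHKSolution {ι E : Type*} [Fintype ι] [DecidableEq ι] [NormedAddCommGroup E]
    [InnerProductSpace ℝ E] (x x' : ι → ℝ → E) (a : ι → ι → ℝ → ℝ) (τ : ℝ → ℝ)
    (τbar lam ψ₀ : ℝ) : Prop where
  lam_pos : 0 < lam
  ψ₀_pos : 0 < ψ₀
  delay_mem : ∀ t, 0 ≤ τ t ∧ τ t ≤ τbar
  rate_mem : ∀ i j t, 0 ≤ t → ψ₀ ≤ a i j t ∧ a i j t ≤ 1 / ψ₀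
  continuousOn : ∀ i, ContinuousOn (x i) (Ici (-τbar))
  hasDerivAt : ∀ i t, 0 < t → HasDerivAt (x i) (x' i t) t
  ode : ∀ i t, 0 < t →
    x' i t = hkField lam (fun j k => a j k t) (fun j => x j t) (fun j => x j (t - τ t)) i

namespace IsDelayedHKSolution

variable {ι E : Type*} [Fintype ι] [DecidableEq ι] [NormedAddCommGroup E] [InnerProductSpace ℝ E]
  {x x' : ι → ℝ → E} {a : ι → ι → ℝ → ℝ} {τ : ℝ → ℝ} {τbar lam ψ₀ : ℝ}

theorem delay_bound_nonneg (hx : IsDelayedHKSolution x x' a τ τbar lam ψ₀) : 0 ≤ τbar :=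
  (hx.delay_mem 0).1.trans (hx.delay_mem 0).2

theorem exists_history_bound (hx : IsDelayedHKSolution x x' a τ τbar lam ψ₀) :
    ∃ M, 0 ≤ M ∧ ∀ i, ∀ s ∈ Icc (-τbar) 0, ‖x i s‖ ≤ M := by
  choose C hC using fun i =>
    isCompact_Icc.exists_bound_of_continuousOn ((hx.continuousOn i).mono Icc_subset_Ici_self)
  obtain ⟨M, hM⟩ := Finite.exists_le C
  exact ⟨max M 0, le_max_right _ _, fun i s hs =>
    (hC i s hs).trans ((hM i).trans (le_max_left _ _))⟩

theorem norm_le_of_history (hx : IsDelayedHKSolution x x' a τ τbar lam ψ₀) {M : ℝ}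
    (hM : ∀ i, ∀ s ∈ Icc (-τbar) 0, ‖x i s‖ ≤ M) {i : ι} {t : ℝ} (ht : -τbar ≤ t) :
    ‖x i t‖ ≤ M := by
  rcases le_or_gt t 0 with ht0 | ht0
  · exact hM i t ⟨ht, ht0⟩
  have hτbar := hx.delay_bound_nonneg
  have hM0 : 0 ≤ M := (norm_nonneg _).trans (hM i 0 ⟨by linarith, le_rfl⟩)
  have hbarrier : ∀ ε > 0, ‖x i t‖ ^ 2 ≤ M ^ 2 + ε * (1 + t) := by
    intro ε hε
    refine forall_le_of_first_touch (f := fun j u => ‖x j u‖ ^ 2)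
      (B := fun u => M ^ 2 + ε * (1 + u)) (B' := fun _ => ε) (t₀ := 0)
      (fun j => ((hx.continuousOn j).mono (Ici_subset_Ici.2 (by linarith))).norm.pow 2)
      (fun u => by simpa using (((hasDerivAt_id u).const_add 1).const_mul ε).const_add (M ^ 2))
      (fun j => by
        have := hM j 0 ⟨by linarith, le_rfl⟩
        nlinarith [norm_nonneg (x j 0)]) ?_ t ht0.le i
    intro u hu hhist j hj
    have hτu := hx.delay_mem u
    refine ⟨_, (hx.hasDerivAt j u hu).norm_sq, ?_⟩
    -- at a first contact every delayed position lies in the ball of radius `‖x j u‖`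
    have hdelayed : ∀ k, ‖x k (u - τ u)‖ ≤ ‖x j u‖ := by
      intro k
      rcases le_or_gt 0 (u - τ u) with h0 | h0
      · have := hhist k (u - τ u) ⟨h0, by linarith⟩
        exact (pow_le_pow_iff_left₀ (norm_nonneg _) (norm_nonneg _) two_ne_zero).1
          (by nlinarith)
      · exact (hM k (u - τ u) ⟨by linarith, h0.le⟩).trans
          ((pow_le_pow_iff_left₀ hM0 (norm_nonneg _) two_ne_zero).1 (by nlinarith))
    have := inner_hkField_self_nonpos (a := fun k l => a k l u) (y := fun k => x k u)
      (z := fun k => x k (u - τ u)) hx.lam_pos.le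
      (fun k => hx.ψ₀_pos.le.trans (hx.rate_mem j k u hu.le).1) hdelayed
    rw [← hx.ode j u hu, real_inner_comm] at this
    linarith
  refine (pow_le_pow_iff_left₀ (norm_nonneg _) hM0 two_ne_zero).1
    (le_of_forall_pos_le_add fun η hη => ?_)
  have := hbarrier (η / (1 + t)) (by positivity)
  rwa [div_mul_cancel₀ _ (by positivity)] at this

theorem norm_delay_sub_le (hx : IsDelayedHKSolution x x' a τ τbar lam ψ₀) {k : ι} {t H : ℝ}
    (ht : 0 < t - τ t) (hH : ∀ s ∈ Icc (t - τ t) t, ‖x' k s‖ ≤ H) :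
    ‖x k (t - τ t) - x k t‖ ≤ τbar * H := by
  have hτt := hx.delay_mem t
  have hH0 : 0 ≤ H := (norm_nonneg _).trans (hH t ⟨by linarith, le_rfl⟩)
  have hmvt := norm_image_sub_le_of_norm_deriv_le_segment'
    (fun s hs => (hx.hasDerivAt k s (ht.trans_le hs.1)).hasDerivWithinAt)
    (fun s hs => hH s (Ico_subset_Icc_self hs)) t ⟨by linarith, le_rfl⟩
  rw [norm_sub_rev, sub_sub_cancel] at hmvt
  exact hmvt.trans (by rw [mul_comm]; gcongr; exact hτt.2)

theorem norm_deriv_le (hx : IsDelayedHKSolution x x' a τ τbar lam ψ₀) {i : ι} {t K : ℝ}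
    (ht : 0 < t) (hK : ∀ j, ‖x j (t - τ t) - x i t‖ ≤ K) : ‖x' i t‖ ≤ lam / ψ₀ * K := by
  rw [hx.ode i t ht, div_eq_mul_one_div]
  refine norm_hkField_le hx.lam_pos.le (fun j => ?_) hK
  have hrate := hx.rate_mem i j t ht.le
  rw [abs_of_pos (hx.ψ₀_pos.trans_le hrate.1)]
  exact hrate.2

theorem norm_sub_le_of_history (hx : IsDelayedHKSolution x x' a τ τbar lam ψ₀) {M : ℝ}
    (hM : ∀ i, ∀ s ∈ Icc (-τbar) 0, ‖x i s‖ ≤ M) {i j : ι} {t : ℝ} (ht : -τbar ≤ t) :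
    ‖x i t - x j t‖ ≤ 2 * M :=
  (norm_sub_le_of_le (hx.norm_le_of_history hM ht) (hx.norm_le_of_history hM ht)).trans_eq
    (two_mul M).symm

theorem norm_deriv_le_of_history (hx : IsDelayedHKSolution x x' a τ τbar lam ψ₀) {M : ℝ}
    (hM : ∀ i, ∀ s ∈ Icc (-τbar) 0, ‖x i s‖ ≤ M) {i : ι} {t : ℝ} (ht : 0 < t) :
    ‖x' i t‖ ≤ lam / ψ₀ * (2 * M) :=
  hx.norm_deriv_le ht fun _ =>
    (norm_sub_le_of_le (hx.norm_le_of_history hM (by linarith [(hx.delay_mem t).2]))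
      (hx.norm_le_of_history hM (by linarith [hx.delay_bound_nonneg]))).trans_eq (two_mul M).symm

theorem norm_deriv_le_of_bounds (hx : IsDelayedHKSolution x x' a τ τbar lam ψ₀) {s G H : ℝ}
    (hs : 0 < s) (hG : ∀ t ≥ s, ∀ i j, ‖x i t - x j t‖ ≤ G) (hH : ∀ t ≥ s, ∀ i, ‖x' i t‖ ≤ H) :
    ∀ t ≥ s + τbar, ∀ i, ‖x' i t‖ ≤ lam / ψ₀ * G + lam * τbar / ψ₀ * H := by
  intro t ht i
  have hτt := hx.delay_mem t
  have hK : ∀ j, ‖x j (t - τ t) - x i t‖ ≤ τbar * H + G := fun j => by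
    rw [← sub_add_sub_cancel _ (x j t)]
    exact norm_add_le_of_le
      (hx.norm_delay_sub_le (by linarith) fun u hu => hH u (by linarith [hu.1]) j)
      (hG t (by linarith) j i)
  exact (hx.norm_deriv_le (by linarith) hK).trans_eq (by ring)

theorem norm_sub_le_exp_decay (hx : IsDelayedHKSolution x x' a τ τbar lam ψ₀) {s G H : ℝ}
    (hs : 0 < s) (hG : ∀ t ≥ s, ∀ i j, ‖x i t - x j t‖ ≤ G)
    (hH : ∀ t ≥ s, ∀ i, ‖x' i t‖ ≤ H) :
    ∀ t ≥ s + τbar, ∀ i j, ‖x i t - x j t‖ ≤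
      2 * τbar / ψ₀ ^ 2 * H +
        (G - 2 * τbar / ψ₀ ^ 2 * H) * exp (-(lam * ψ₀) * (t - (s + τbar))) := by
  intro t ht i j
  have hτbar := hx.delay_bound_nonneg
  have hψ₀ := hx.ψ₀_pos
  have hG0 : 0 ≤ G := (norm_nonneg _).trans (hG s le_rfl i i)
  have hH0 : 0 ≤ H := (norm_nonneg _).trans (hH s le_rfl i)
  refine le_exp_decay_of_deriv_le_at_max (f := fun pq u => ‖x pq.1 u - x pq.2 u‖)
    (t₁ := s + τbar) (m := 2 * τbar / ψ₀ ^ 2 * H) (mul_pos hx.lam_pos hψ₀) (by positivity) hG0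
    (fun pq u hu => ?_)
    (fun pq => hG _ (by linarith) _ _) ?_ t ht (i, j)
  · have hu0 : 0 < u := by linarith [mem_Ici.1 hu]
    exact ((hx.hasDerivAt pq.1 u hu0).sub
      (hx.hasDerivAt pq.2 u hu0)).continuousAt.norm.continuousWithinAt
  rintro u hu ⟨p, q⟩ hmax hpos
  have hu0 : 0 < u := by linarith
  have hτu := hx.delay_mem u
  have hdelay : ∀ k, ‖x k (u - τ u) - x k u‖ ≤ τbar * H := fun k =>
    hx.norm_delay_sub_le (by linarith) fun r hr => hH r (by linarith [hr.1]) k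
  refine ⟨_, ((hx.hasDerivAt p u hu0).sub (hx.hasDerivAt q u hu0)).norm (norm_pos_iff.1 hpos), ?_⟩
  have key := inner_hkField_sub_le_of_maximal (a := fun k l => a k l u) (y := fun k => x k u)
    (z := fun k => x k (u - τ u)) hψ₀ hx.lam_pos.le (fun k l => hx.rate_mem k l u hu0.le)
    hdelay fun k l => hmax (k, l)
  rw [← hx.ode p u hu0, ← hx.ode q u hu0, real_inner_comm] at key
  dsimp only at hpos key ⊢
  rw [Pi.sub_apply, div_le_iff₀ hpos]
  refine key.trans_eq ?_
  field_simp
  ring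

theorem diam_speed_step (hx : IsDelayedHKSolution x x' a τ τbar lam ψ₀) {s s₀ G H : ℝ}
    (hs : 0 < s) (hs₀ : 0 ≤ s₀) (hG : ∀ t ≥ s, ∀ i j, ‖x i t - x j t‖ ≤ G)
    (hH : ∀ t ≥ s, ∀ i, ‖x' i t‖ ≤ H) :
    (∀ t ≥ s + (2 * τbar + s₀), ∀ i j, ‖x i t - x j t‖ ≤
      exp (-(lam * ψ₀) * s₀) * G + 2 * τbar / ψ₀ ^ 2 * (lam / ψ₀ * G + lam * τbar / ψ₀ * H)) ∧
    (∀ t ≥ s + (2 * τbar + s₀), ∀ i, ‖x' i t‖ ≤ lam / ψ₀ * G + lam * τbar / ψ₀ * H) := by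
  have hτbar := hx.delay_bound_nonneg
  have hA : 0 < lam * ψ₀ := mul_pos hx.lam_pos hx.ψ₀_pos
  have hH' := hx.norm_deriv_le_of_bounds hs hG hH
  refine ⟨fun t ht i j => ?_, fun t ht => hH' t (by linarith)⟩
  have hdecay := hx.norm_sub_le_exp_decay (by linarith) (fun t ht => hG t (by linarith)) hH'
    t (by linarith) i j
  have hG0 : 0 ≤ G := (norm_nonneg _).trans (hG s le_rfl i i)
  have hm0 : 0 ≤ 2 * τbar / ψ₀ ^ 2 * (lam / ψ₀ * G + lam * τbar / ψ₀ * H) :=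
    mul_nonneg (by positivity) ((norm_nonneg _).trans (hH' _ le_rfl i))
  have hE : exp (-(lam * ψ₀) * (t - (s + τbar + τbar))) ≤ exp (-(lam * ψ₀) * s₀) :=
    exp_le_exp.2 (by nlinarith)
  nlinarith [exp_pos (-(lam * ψ₀) * (t - (s + τbar + τbar)))]

theorem diam_le_geometric (hx : IsDelayedHKSolution x x' a τ τbar lam ψ₀) {s s₀ μ κ G H : ℝ}
    (hs : 0 < s) (hs₀ : 0 ≤ s₀) (hμ : 0 ≤ μ) (hκ : 0 ≤ κ)
    (hcontr : ∀ G H, 0 ≤ G → 0 ≤ H →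
      exp (-(lam * ψ₀) * s₀) * G + 2 * τbar / ψ₀ ^ 2 * (lam / ψ₀ * G + lam * τbar / ψ₀ * H) +
        μ * (lam / ψ₀ * G + lam * τbar / ψ₀ * H) ≤ κ * (G + μ * H))
    (hG0 : 0 ≤ G) (hH0 : 0 ≤ H) (hG : ∀ t ≥ s, ∀ i j, ‖x i t - x j t‖ ≤ G)
    (hH : ∀ t ≥ s, ∀ i, ‖x' i t‖ ≤ H) :
    ∀ n : ℕ, ∀ t ≥ s + n * (2 * τbar + s₀), ∀ i j, ‖x i t - x j t‖ ≤ (G + μ * H) * κ ^ n := by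
  have hτbar := hx.delay_bound_nonneg
  have hψ₀ := hx.ψ₀_pos
  have hlam := hx.lam_pos
  suffices h : ∀ n : ℕ, ∃ Gn Hn, 0 ≤ Gn ∧ 0 ≤ Hn ∧ Gn + μ * Hn ≤ (G + μ * H) * κ ^ n ∧
      (∀ t ≥ s + n * (2 * τbar + s₀), ∀ i j, ‖x i t - x j t‖ ≤ Gn) ∧
      (∀ t ≥ s + n * (2 * τbar + s₀), ∀ i, ‖x' i t‖ ≤ Hn) by
    intro n t ht i j
    obtain ⟨Gn, Hn, -, hHn, hsum, hGn, -⟩ := h n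
    exact (hGn t ht i j).trans (by nlinarith)
  intro n
  induction n with
  | zero => exact ⟨G, H, hG0, hH0, by simp, by simpa using hG, by simpa using hH⟩
  | succ n ih =>
    obtain ⟨Gn, Hn, hGn0, hHn0, hsum, hGn, hHn⟩ := ih
    obtain ⟨hdiam, hspeed⟩ := hx.diam_speed_step (by positivity) hs₀ hGn hHn
    refine ⟨_, _, by positivity, by positivity, (hcontr Gn Hn hGn0 hHn0).trans ?_,
      fun t ht => hdiam t (by push_cast at ht; linarith),
      fun t ht => hspeed t (by push_cast at ht; linarith)⟩
    rw [pow_succ]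
    nlinarith

end IsDelayedHKSolution

open Finset in
theorem HK_exponential_consensus_general {d N : ℕ}
    (x x' : Fin N → ℝ → EuclideanSpace ℝ (Fin d))
    (a : Fin N → Fin N → ℝ → ℝ) (τ : ℝ → ℝ) (τbar lam ψ₀ c : ℝ)
    (hlam : 0 < lam) (hψ₀ : 0 < ψ₀)
    (hc0 : 0 < c) (hc1 : c < 1)
    (hτ : ∀ t, 0 ≤ τ t ∧ τ t ≤ τbar)
    (ha : ∀ i j t, 0 ≤ t → ψ₀ ≤ a i j t ∧ a i j t ≤ 1 / ψ₀)
    (hcont : ∀ i, ContinuousOn (x i) (Set.Ici (-τbar)))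
    (hderiv : ∀ i t, 0 < t → HasDerivAt (x i) (x' i t) t)
    (hODE : ∀ i t, 0 < t →
      x' i t = (lam / (N : ℝ)) •
        ∑ j ∈ Finset.univ.erase i, a i j t • (x j (t - τ t) - x i t))
    (dX : ℝ → ℝ)
    (hdX : ∀ t, (∀ i j, ‖x i t - x j t‖ ≤ dX t) ∧ ∃ i j, dX t = ‖x i t - x j t‖)
    (hτbar : τbar < Real.log (1 + ψ₀ ^ 3 * (1 - c) / ((2 + ψ₀ ^ 2) * lam))) :
    ∃ γ C : ℝ, 0 < γ ∧ 0 < C ∧ ∀ t, 0 ≤ t → dX t ≤ C * Real.exp (-γ * t) := by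
  have hx : IsDelayedHKSolution x x' a τ τbar lam ψ₀ := ⟨hlam, hψ₀, hτ, ha, hcont, hderiv,
    fun i t ht => by rw [hODE i t ht, hkField, Fintype.card_fin]⟩
  have hτbar0 := hx.delay_bound_nonneg
  obtain ⟨M, hM0, hM⟩ := hx.exists_history_bound
  obtain ⟨ε, μ, κ, hε0, hε1, hμ, hκ0, hκ1, hcontr⟩ := exists_weighted_contraction
    (α := 2 * τbar / ψ₀ ^ 2) (β := lam / ψ₀) (θ := lam * τbar / ψ₀) (by positivity)
    (by positivity) (by positivity) (delay_coupling_lt_one hlam hψ₀ hc0 hc1 hτbar)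
  -- the waiting time after which the initial diameter has decayed by the factor `ε`
  set s₀ := log ε / -(lam * ψ₀)
  have hs₀ : 0 < s₀ := div_pos_of_neg_of_neg (log_neg hε0 hε1) (by nlinarith)
  have hε : exp (-(lam * ψ₀) * s₀) = ε := by
    rw [mul_div_cancel₀ _ (by nlinarith), exp_log hε0]
  have hgeom := hx.diam_le_geometric one_pos hs₀.le hμ.le hκ0.le (hε ▸ hcontr) (by positivity)
    (by positivity) (fun t ht i j => hx.norm_sub_le_of_history hM (by linarith))
    (fun t ht i => hx.norm_deriv_le_of_history hM (by linarith))
  refine exists_exp_decay_of_geometric (T := 1) (L := 2 * τbar + s₀) (M := 2 * M)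
    (Z := 2 * M + μ * (lam / ψ₀ * (2 * M))) (by positivity) hκ0 hκ1 (fun t ht => ?_)
    (fun n t ht => ?_) <;> obtain ⟨i, j, hij⟩ := (hdX t).2 <;> rw [hij]
  · exact hx.norm_sub_le_of_history hM (by linarith)
  · exact hgeom n t ht i j

open Finset in
theorem HK_exponential_consensus {d N : ℕ} (hN : 0 < N)
    (x x' : Fin N → ℝ → EuclideanSpace ℝ (Fin d))
    (a : Fin N → Fin N → ℝ → ℝ) (τ τ' : ℝ → ℝ) (τbar lam ψ₀ c : ℝ)
    (hlam : 0 < lam) (hψ₀ : 0 < ψ₀) (hψ₀le : ψ₀ ≤ 1)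
    (hc0 : 0 < c) (hc1 : c < 1)
    (hτ : ∀ t, 0 ≤ τ t ∧ τ t ≤ τbar)
    (hτderiv : ∀ t, 0 < t → HasDerivAt τ (τ' t) t)
    (hτ' : ∀ t, 0 < t → τ' t ≤ c)
    (ha : ∀ i j t, 0 ≤ t → ψ₀ ≤ a i j t ∧ a i j t ≤ 1 / ψ₀)
    (hcont : ∀ i, ContinuousOn (x i) (Set.Ici (-τbar)))
    (hderiv : ∀ i t, 0 < t → HasDerivAt (x i) (x' i t) t)
    (hODE : ∀ i t, 0 < t →
      x' i t = (lam / (N : ℝ)) •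
        ∑ j ∈ Finset.univ.erase i, a i j t • (x j (t - τ t) - x i t))
    (dX : ℝ → ℝ)
    (hdX : ∀ t, (∀ i j, ‖x i t - x j t‖ ≤ dX t) ∧ ∃ i j, dX t = ‖x i t - x j t‖)
    (hτbar : τbar < Real.log (1 + ψ₀ ^ 3 * (1 - c) / ((2 + ψ₀ ^ 2) * lam))) :
    ∃ γ C : ℝ, 0 < γ ∧ 0 < C ∧ ∀ t, 0 ≤ t → dX t ≤ C * Real.exp (-γ * t) :=
  HK_exponential_consensus_general x x' a τ τbar lam ψ₀ c hlam hψ₀ hc0 hc1 hτ ha hcont hderiv hODE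
    dX hdX hτbar
end
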